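/- For all n ≥ 2, the set D = {(0,0,1), (n−1,n−1,2)} is an (n−1)-quasi-perfect code in P_n □ P_n □ P_4: the codewords are at distance 2n−1, and the covering radius of D is exactly n. -/

import Mathlib

/-!
Each of the first two coordinates contributes exactly `n - 1` to the sum of the distances from a
vertex to the two codewords, and the third contributes at most `3`; so that sum is at most
`2n + 1`, and one of the codewords lies within distance `n`. The vertex `(n - 1, 0, 0)` is at
distance `n` and `n + 1` from them.
-/

/-- Distance between labels on a path: `|x - y|`. -/
def pathDist (x y : ℕ) : ℕ := ((x : ℤ) - y).natAbs

lemma pathDist_zero_add_pathDist_pred {n a : ℕ} (ha : a < n) :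
    pathDist a 0 + pathDist a (n - 1) = n - 1 := by
  unfold pathDist
  omega

lemma pathDist_one_add_pathDist_two_le {z : ℕ} (hz : z < 4) :
    pathDist z 1 + pathDist z 2 ≤ 3 := by
  unfold pathDist
  omega

theorem quasi_perfect_code_in_Pn_Pn_P4 (n : ℕ) (hn : 2 ≤ n) :
    -- L1 distance in P_n □ P_n □ P_4
    let dist : Fin n × Fin n × Fin 4 → Fin n × Fin n × Fin 4 → ℕ :=
      fun p q => pathDist p.1.val q.1.val + pathDist p.2.1.val q.2.1.val +
        pathDist p.2.2.val q.2.2.val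
    let c0 : Fin n × Fin n × Fin 4 := (⟨0, by omega⟩, ⟨0, by omega⟩, 1)
    let c1 : Fin n × Fin n × Fin 4 := (⟨n - 1, by omega⟩, ⟨n - 1, by omega⟩, 2)
    let D : Set (Fin n × Fin n × Fin 4) := {c0, c1}
    -- the two codewords are at distance 2n-1
    dist c0 c1 = 2 * n - 1 ∧
    -- covering radius exactly n
    (∀ v : Fin n × Fin n × Fin 4, ∃ d ∈ D, dist v d ≤ n) ∧
    (∃ v : Fin n × Fin n × Fin 4, ∀ d ∈ D, n ≤ dist v d) := by
  intro dist c0 c1 D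
  refine ⟨?_, fun v => ?_, ⟨(⟨n - 1, by omega⟩, ⟨0, by omega⟩, 0), ?_⟩⟩
  · simp only [dist, c0, c1, pathDist, Fin.val_one, Fin.val_two]
    omega
  · have hsum : dist v c0 + dist v c1 ≤ 2 * n + 1 := by
      have hx := pathDist_zero_add_pathDist_pred v.1.isLt
      have hy := pathDist_zero_add_pathDist_pred v.2.1.isLt
      have hz := pathDist_one_add_pathDist_two_le v.2.2.isLt
      simp only [dist, c0, c1, Fin.val_one, Fin.val_two]
      omega
    by_cases h0 : dist v c0 ≤ n
    · exact ⟨c0, Or.inl rfl, h0⟩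
    · exact ⟨c1, Or.inr rfl, by omega⟩
  · rintro d (rfl | rfl) <;>
      simp only [dist, c0, c1, pathDist, Fin.val_zero, Fin.val_one, Fin.val_two] <;> omega
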